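/- Let W be the group presented by generators x, y, z and relators x², y², z², (xy)³, (yz)³, and let Δ be the group presented by generators x, y, z and relators x², y², z², (xy)³, (yz)³, (xz)² (the spherical triangle group Δ(3,3,2), isomorphic to the symmetric group S₄). Let φ : W → Δ be the canonical surjection sending generators to generators. Then the kernel of φ is a free group, and it is nonabelian (in particular, it is free of rank at least 2). -/

import Mathlib

/-!
With `S₃ = ⟨x, y⟩`, the elements `p = zx` and `q = yzxy` of `W` generate a free group `F₂`
normalised by `x` and `y`, and `x ↦ x, y ↦ y, z ↦ p x` embeds `W` into `F₂ ⋊ S₃`, with an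
explicit left inverse. The retraction `W → S₃`, `z ↦ x`, factors through `Δ`, so `ker φ`
embeds into `F₂` and is free by Nielsen–Schreier. The kernel elements `(xz)²` and
`y (xz)² y` map to `p⁻²` and `q⁻²`, which do not commute.
-/

/-- The relators of `W = ⟨x, y, z | x², y², z², (xy)³, (yz)³⟩`, with `x, y, z` the generators
`0, 1, 2 : Fin 3`. -/
def relsW : Set (FreeGroup (Fin 3)) :=
  {FreeGroup.of 0 ^ 2, FreeGroup.of 1 ^ 2, FreeGroup.of 2 ^ 2,
    (FreeGroup.of 0 * FreeGroup.of 1) ^ 3, (FreeGroup.of 1 * FreeGroup.of 2) ^ 3}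

/-- The relators of the triangle group `Δ(3,3,2) = ⟨x, y, z | x², y², z², (xy)³, (yz)³, (xz)²⟩`. -/
def relsDelta : Set (FreeGroup (Fin 3)) :=
  {FreeGroup.of 0 ^ 2, FreeGroup.of 1 ^ 2, FreeGroup.of 2 ^ 2,
    (FreeGroup.of 0 * FreeGroup.of 1) ^ 3, (FreeGroup.of 1 * FreeGroup.of 2) ^ 3,
    (FreeGroup.of 0 * FreeGroup.of 2) ^ 2}

open SemidirectProduct

theorem IsFreeGroup.of_injective {G F : Type*} [Group G] [Group F] [IsFreeGroup F] (f : G →* F)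
    (hf : Function.Injective f) : IsFreeGroup G :=
  IsFreeGroup.ofMulEquiv (MonoidHom.ofInjective hf).symm

theorem mul_mul_of_mul_self_eq_one {M : Type*} [Monoid M] {a : M} (h : a * a = 1) (b : M) :
    a * (a * b) = b := by
  rw [← mul_assoc, h, one_mul]

theorem braid_of_mul_self_eq_one {G : Type*} [Group G] {a b : G} (ha : a * a = 1)
    (hb : b * b = 1) (hab : (a * b) ^ 3 = 1) : a * b * a = b * a * b := by
  calc a * b * a = (b * a * b)⁻¹ :=
        eq_inv_of_mul_eq_one_left (by simpa [pow_succ, mul_assoc] using hab)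
    _ = b * a * b := by
      simp only [mul_inv_rev, inv_eq_of_mul_eq_one_right ha, inv_eq_of_mul_eq_one_right hb,
        mul_assoc]

theorem mul_pow_three_eq_one_comm {G : Type*} [Group G] {a b : G} (hab : (a * b) ^ 3 = 1) :
    (b * a) ^ 3 = 1 := by
  have := (SemiconjBy.pow_right (x := b * a) (y := a * b) (mul_assoc a b a).symm 3)
  rwa [hab, SemiconjBy, one_mul, mul_eq_left] at this

theorem MonoidHom.comp_mulAut_eq_conj_comp_of_closure_eq_top {N H M : Type*} [Group N] [Group H]
    [Group M] {α : H →* MulAut N} (f : N →* M) (g : H →* M) {S : Set H}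
    (hS : Subgroup.closure S = ⊤)
    (hSf : ∀ s ∈ S, f.comp (α s).toMonoidHom = (MulAut.conj (g s)).toMonoidHom.comp f) (h : H) :
    f.comp (α h).toMonoidHom = (MulAut.conj (g h)).toMonoidHom.comp f := by
  suffices key : ∀ n, f (α h n) = g h * f n * (g h)⁻¹ by ext n; simp [key]
  induction (hS ▸ Subgroup.mem_top h : h ∈ Subgroup.closure S) using Subgroup.closure_induction with
  | mem s hs => simpa using DFunLike.congr_fun (hSf s hs)
  | one => simp
  | mul a b _ _ ha hb => intro n; simp [ha, hb, mul_assoc]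
  | inv a _ ha =>
    intro n
    have := ha (α a⁻¹ n)
    rw [← MulAut.mul_apply, ← map_mul, mul_inv_cancel, map_one, MulAut.one_apply,
      eq_mul_inv_iff_mul_eq, ← inv_mul_eq_iff_eq_mul] at this
    rw [← this, map_inv, inv_inv, mul_assoc]

theorem SemidirectProduct.isFreeGroup_of_le_ker_rightHom_comp {N H G : Type*} [Group N] [Group H]
    [Group G] [IsFreeGroup N] {α : H →* MulAut N} {ψ : G →* N ⋊[α] H}
    (hψ : Function.Injective ψ) {K : Subgroup G} (hK : K ≤ (rightHom.comp ψ).ker) :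
    IsFreeGroup K := by
  have hright (k : K) : (ψ k).right = 1 := hK k.2
  let j : K →* N :=
    { toFun k := (ψ k).left
      map_one' := by simp
      map_mul' a b := by simp [mul_left, hright] }
  refine IsFreeGroup.of_injective j fun a b hab => Subtype.ext (hψ (SemidirectProduct.ext hab ?_))
  rw [hright, hright]

theorem FreeGroup.mulEquiv_ext {α G : Type*} [Group G] {e f : FreeGroup α ≃* G}
    (h : ∀ a, e (FreeGroup.of a) = f (FreeGroup.of a)) : e = f :=
  MulEquiv.toMonoidHom_injective (FreeGroup.ext_hom _ _ h)

namespace TriangleGroup332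

open PresentedGroup (of toGroup)

local notation "F₂" => FreeGroup (Fin 2)

local notation "p" => (FreeGroup.of 0 : F₂)

local notation "q" => (FreeGroup.of 1 : F₂)

def relsS3 : Set F₂ :=
  {FreeGroup.of 0 ^ 2, FreeGroup.of 1 ^ 2, (FreeGroup.of 0 * FreeGroup.of 1) ^ 3}

abbrev S3 := PresentedGroup relsS3

abbrev W := PresentedGroup relsW

abbrev Δ := PresentedGroup relsDelta

theorem S3.x_sq : (of 0 : S3) ^ 2 = 1 := PresentedGroup.one_of_mem (by simp [relsS3])
theorem S3.y_sq : (of 1 : S3) ^ 2 = 1 := PresentedGroup.one_of_mem (by simp [relsS3])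
theorem S3.xy_cube : (of 0 * of 1 : S3) ^ 3 = 1 := PresentedGroup.one_of_mem (by simp [relsS3])

theorem Δ.y_sq : (of 1 : Δ) ^ 2 = 1 := PresentedGroup.one_of_mem (by simp [relsDelta])
theorem Δ.xz_sq : (of 0 * of 2 : Δ) ^ 2 = 1 := PresentedGroup.one_of_mem (by simp [relsDelta])

theorem W.x_mul_self : (of 0 : W) * of 0 = 1 :=
  PresentedGroup.one_of_mem (x := FreeGroup.of 0 ^ 2) (by simp [relsW])
theorem W.y_mul_self : (of 1 : W) * of 1 = 1 :=
  PresentedGroup.one_of_mem (x := FreeGroup.of 1 ^ 2) (by simp [relsW])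
theorem W.z_mul_self : (of 2 : W) * of 2 = 1 :=
  PresentedGroup.one_of_mem (x := FreeGroup.of 2 ^ 2) (by simp [relsW])
theorem W.xy_cube : (of 0 * of 1 : W) ^ 3 = 1 := PresentedGroup.one_of_mem (by simp [relsW])
theorem W.yz_cube : (of 1 * of 2 : W) ^ 3 = 1 := PresentedGroup.one_of_mem (by simp [relsW])

theorem W.yxy : (of 1 * (of 0 * of 1) : W) = of 0 * (of 1 * of 0) := by
  simpa [mul_assoc] using (braid_of_mul_self_eq_one W.x_mul_self W.y_mul_self W.xy_cube).symm

theorem W.zyz_mul (w : W) : of 2 * (of 1 * (of 2 * w)) = of 1 * (of 2 * (of 1 * w)) := by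
  simpa [mul_assoc] using
    congrArg (· * w) (braid_of_mul_self_eq_one W.y_mul_self W.z_mul_self W.yz_cube).symm

-- Conjugation by `x` and by `y` on `p = zx` and `q = yzxy`, see `fromF₂`.
def actXHom : F₂ →* F₂ := FreeGroup.lift ![p⁻¹, p⁻¹ * q]

theorem actXHom_comp_self : actXHom.comp actXHom = MonoidHom.id F₂ := by
  ext i; fin_cases i <;> simp [actXHom]

def actX : MulAut F₂ := actXHom.toMulEquiv actXHom actXHom_comp_self actXHom_comp_self

def actY : MulAut F₂ := FreeGroup.freeGroupCongr (Equiv.swap 0 1)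

@[simp] theorem actX_p : actX p = p⁻¹ := by simp [actX, actXHom]
@[simp] theorem actX_q : actX q = p⁻¹ * q := by simp [actX, actXHom]
@[simp] theorem actY_p : actY p = q := by simp [actY, FreeGroup.freeGroupCongr]
@[simp] theorem actY_q : actY q = p := by simp [actY, FreeGroup.freeGroupCongr]

def act : S3 →* MulAut F₂ := toGroup (f := ![actX, actY]) <| by
  rintro r (rfl | rfl | rfl) <;> apply FreeGroup.mulEquiv_ext <;> intro i <;> fin_cases i <;>
    simp [pow_succ]

@[simp] theorem act_x : act (of 0) = actX := toGroup.of _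
@[simp] theorem act_y : act (of 1) = actY := toGroup.of _

local notation "G" => F₂ ⋊[act] S3

-- `z = (zx) x`
def zImage : G := inl p * inr (of 0)

theorem zImage_sq : zImage ^ 2 = 1 := by
  ext
  · simp [zImage, sq, mul_left]
  · simpa [zImage, sq, mul_right] using S3.x_sq

theorem y_mul_zImage_cube : (inr (of 1) * zImage) ^ 3 = 1 := by
  ext
  · simp [zImage, pow_succ, mul_left]
  · simpa [zImage, pow_succ, mul_right] using mul_pow_three_eq_one_comm S3.xy_cube

def toSemidirect : W →* G := toGroup (f := ![inr (of 0), inr (of 1), zImage]) <| by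
  rintro r (rfl | rfl | rfl | rfl | rfl) <;>
    simp only [map_pow, map_mul, FreeGroup.lift_apply_of, Matrix.cons_val]
  exacts [by rw [← map_pow, S3.x_sq, map_one], by rw [← map_pow, S3.y_sq, map_one], zImage_sq,
    by rw [← map_mul, ← map_pow, S3.xy_cube, map_one], y_mul_zImage_cube]

@[simp] theorem toSemidirect_x : toSemidirect (of 0) = inr (of 0) := toGroup.of _
@[simp] theorem toSemidirect_y : toSemidirect (of 1) = inr (of 1) := toGroup.of _
@[simp] theorem toSemidirect_z : toSemidirect (of 2) = zImage := toGroup.of _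

def toS3 : Δ →* S3 := toGroup (f := ![of 0, of 1, of 0]) <| by
  rintro r (rfl | rfl | rfl | rfl | rfl | rfl) <;>
    simp only [map_pow, map_mul, FreeGroup.lift_apply_of, Matrix.cons_val]
  exacts [S3.x_sq, S3.y_sq, S3.x_sq, S3.xy_cube, mul_pow_three_eq_one_comm S3.xy_cube,
    by rw [← sq, ← pow_mul, pow_mul, S3.x_sq, one_pow]]

theorem rightHom_comp_toSemidirect {φ : W →* Δ} (hφ : ∀ i, φ (of i) = of i) :
    rightHom.comp toSemidirect = toS3.comp φ := by
  refine PresentedGroup.ext fun i => ?_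
  fin_cases i <;> simp [hφ, toS3, zImage]

theorem ker_le_ker_rightHom_comp_toSemidirect {φ : W →* Δ} (hφ : ∀ i, φ (of i) = of i) :
    φ.ker ≤ (rightHom.comp toSemidirect).ker := by
  rw [rightHom_comp_toSemidirect hφ, ← MonoidHom.comap_ker]
  exact MonoidHom.ker_le_comap _ _

def fromF₂ : F₂ →* W := FreeGroup.lift ![of 2 * of 0, of 1 * of 2 * of 0 * of 1]

def fromS3 : S3 →* W := toGroup (f := ![of 0, of 1]) <| by
  rintro r (rfl | rfl | rfl) <;>
    simp only [map_pow, map_mul, FreeGroup.lift_apply_of, Matrix.cons_val, sq]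
  exacts [W.x_mul_self, W.y_mul_self, W.xy_cube]

theorem fromF₂_comp_act (s : S3) :
    fromF₂.comp (act s).toMonoidHom = (MulAut.conj (fromS3 s)).toMonoidHom.comp fromF₂ := by
  refine MonoidHom.comp_mulAut_eq_conj_comp_of_closure_eq_top _ _
    (PresentedGroup.closure_range_of _) ?_ s
  rintro _ ⟨i, rfl⟩
  refine FreeGroup.ext_hom _ _ fun j => ?_
  fin_cases i <;> fin_cases j <;>
    simp [fromF₂, fromS3, mul_assoc, inv_eq_of_mul_eq_one_right W.x_mul_self,
      inv_eq_of_mul_eq_one_right W.y_mul_self, inv_eq_of_mul_eq_one_right W.z_mul_self,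
      mul_mul_of_mul_self_eq_one W.y_mul_self, W.x_mul_self, W.y_mul_self, W.zyz_mul, W.yxy]

def ofSemidirect : G →* W := SemidirectProduct.lift fromF₂ fromS3 fromF₂_comp_act

theorem ofSemidirect_comp_toSemidirect : ofSemidirect.comp toSemidirect = MonoidHom.id W :=
  PresentedGroup.ext fun i => by
    fin_cases i <;> simp [ofSemidirect, fromF₂, fromS3, zImage, mul_assoc, W.x_mul_self]

theorem toSemidirect_injective : Function.Injective toSemidirect :=
  Function.LeftInverse.injective (g := ofSemidirect)
    (DFunLike.congr_fun ofSemidirect_comp_toSemidirect)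

theorem toSemidirect_xz_sq : toSemidirect ((of 0 * of 2) ^ 2) = inl (p⁻¹ ^ 2) := by
  have : toSemidirect (of 0 * of 2) = inl p⁻¹ := by
    ext
    · simp [zImage, mul_left]
    · simpa [zImage, mul_right, sq] using S3.x_sq
  rw [map_pow, this, map_pow]

theorem toSemidirect_y_mul_xz_sq_mul_y :
    toSemidirect (of 1 * (of 0 * of 2) ^ 2 * of 1) = inl (q⁻¹ ^ 2) := by
  rw [map_mul, map_mul, toSemidirect_xz_sq, toSemidirect_y]
  ext
  · simp only [mul_left, mul_right, left_inl, left_inr, right_inl, right_inr]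
    simp
  · simpa [mul_right, sq] using S3.y_sq

theorem xz_sq_mem_ker {φ : W →* Δ} (hφ : ∀ i, φ (of i) = of i) : (of 0 * of 2) ^ 2 ∈ φ.ker := by
  simpa [hφ] using Δ.xz_sq

theorem y_mul_xz_sq_mul_y_mem_ker {φ : W →* Δ} (hφ : ∀ i, φ (of i) = of i) :
    of 1 * (of 0 * of 2) ^ 2 * of 1 ∈ φ.ker := by
  simpa [hφ, Δ.xz_sq, ← sq] using Δ.y_sq

end TriangleGroup332

open TriangleGroup332

theorem stmt_9 (φ : PresentedGroup relsW →* PresentedGroup relsDelta)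
    (hφ : ∀ i : Fin 3, φ (PresentedGroup.of i) = PresentedGroup.of i) :
    IsFreeGroup φ.ker ∧ ∃ a b : φ.ker, a * b ≠ b * a := by
  refine ⟨isFreeGroup_of_le_ker_rightHom_comp toSemidirect_injective
    (ker_le_ker_rightHom_comp_toSemidirect hφ), ⟨_, xz_sq_mem_ker hφ⟩,
    ⟨_, y_mul_xz_sq_mul_y_mem_ker hφ⟩, fun h => ?_⟩
  have hpq : (FreeGroup.of 0)⁻¹ ^ 2 * (FreeGroup.of 1)⁻¹ ^ 2 ≠
      ((FreeGroup.of 1)⁻¹ ^ 2 * (FreeGroup.of 0)⁻¹ ^ 2 : FreeGroup (Fin 2)) := by decide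
  apply hpq
  apply inl_injective (φ := act)
  simpa [toSemidirect_xz_sq, toSemidirect_y_mul_xz_sq_mul_y] using
    congrArg (toSemidirect ∘ Subtype.val) h
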